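/- Zero-tail property of the staircase structure (Proposition 2): fix i ∈ [G - R_r + K_c : G]. If M = SCGen(W, (Z_{i'})_{i'∈[G]}) where for i' ≤ i, Z_{i'} has its bottom G - i rows zero, and for i' > i, Z_{i'} = 0 entirely, then all columns of M with index in [λ_i + 1 : λ_G] are zero. -/

import Mathlib

def scG (N Rr : ℕ) : ℕ := N - Rr + 1
def scAlpha (N Rr Kc i : ℕ) : ℕ := N - Rr + Kc + 1 - i
def scBeta (N i : ℕ) : ℕ := N + 1 - i
def scL (N Rr Kc : ℕ) : ℕ := (Finset.Icc 1 (scG N Rr)).lcm (scAlpha N Rr Kc)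
def scGamma (N Rr Kc i : ℕ) : ℕ :=
  if i ≤ 1 then scL N Rr Kc / scAlpha N Rr Kc 1
  else scL N Rr Kc / (scAlpha N Rr Kc (i - 1) * scAlpha N Rr Kc i)
def scLambda (N Rr Kc i : ℕ) : ℕ :=
  if i = 0 then 0 else scL N Rr Kc / scAlpha N Rr Kc i

set_option maxHeartbeats 1000000 in
mutual
  def scM {F : Type} [Field F] (N Rr Kc : ℕ) (W : ℕ → F) (Z : ℕ → ℕ → ℕ → F)
      (i r c : ℕ) : F :=
    if _hi0 : i = 0 then 0
    else if _hi1 : i = 1 then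
      if r < scAlpha N Rr Kc 1 then W (r * scGamma N Rr Kc 1 + c)
      else if r < scBeta N 1 then Z 1 (r - scAlpha N Rr Kc 1) c else 0
    else
      if r < scAlpha N Rr Kc i then
        scCat N Rr Kc W Z i (i - 1) (r * scGamma N Rr Kc i + c)
      else if r < scBeta N i then Z i (r - scAlpha N Rr Kc i) c else 0
  termination_by 2 * i
  decreasing_by omega

  def scCat {F : Type} [Field F] (N Rr Kc : ℕ) (W : ℕ → F) (Z : ℕ → ℕ → ℕ → F)
      (i j k : ℕ) : F :=
    if _hj : j = 0 then 0
    else if k < scLambda N Rr Kc (j - 1) then scCat N Rr Kc W Z i (j - 1) k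
    else scM N Rr Kc W Z j (Rr + i - j - 1) (k - scLambda N Rr Kc (j - 1))
  termination_by 2 * j + 1
  decreasing_by all_goals omega
end

/-!
For `j > i`, the rows of `M_j` above its noise part replicate, in block `j' < j`, the
(0-indexed) row `R_r + j - j' - 1`. Since `G ≤ i + (R_r - K_c)`, that row lies in the noise part
of `M_{j'}`, at noise row `2 R_r + j - N - K_c - 2 ≥ (R_r - K_c) - (G - i)`: it is zero for
`j' ≤ i` because the bottom noise rows vanish, and for `j' > i` because the whole noise block
does. The remaining rows of `M_j` are its own noise `Z_j = 0`.
-/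

section

variable {F : Type} [Field F] (N Rr Kc : ℕ) (W : ℕ → F) (Z : ℕ → ℕ → ℕ → F)

lemma scM_eq_scCat_of_lt_scAlpha {i r : ℕ} (hi : 2 ≤ i) (hr : r < scAlpha N Rr Kc i) (c : ℕ) :
    scM N Rr Kc W Z i r c = scCat N Rr Kc W Z i (i - 1) (r * scGamma N Rr Kc i + c) := by
  rw [scM, dif_neg (by omega), dif_neg (by omega), if_pos hr]

lemma scM_eq_zero_of_scAlpha_le {i r c : ℕ} (hi : 1 ≤ i) (hr : scAlpha N Rr Kc i ≤ r)
    (hZ : Z i (r - scAlpha N Rr Kc i) c = 0) : scM N Rr Kc W Z i r c = 0 := by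
  have hr' : ¬ r < scAlpha N Rr Kc i := by omega
  rw [scM, dif_neg (by omega)]
  split_ifs with h1 <;> first | rfl | exact hZ | (subst h1; first | contradiction | exact hZ)

lemma scCat_eq_zero {i j : ℕ}
    (h : ∀ j', 1 ≤ j' → j' ≤ j → ∀ k, scM N Rr Kc W Z j' (Rr + i - j' - 1) k = 0) (k : ℕ) :
    scCat N Rr Kc W Z i j k = 0 := by
  induction j generalizing k with
  | zero => rw [scCat, dif_pos rfl]
  | succ j ih =>
    rw [scCat, dif_neg (by omega)]
    split_ifs
    · exact ih (fun j' h1 hj' ↦ h j' h1 (by omega)) k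
    · exact h (j + 1) (by omega) le_rfl _

end

/-- Zero-tail property of the staircase structure (Proposition 2): fix
`i ∈ [G - R_r + K_c : G]`. If `M = SCGen(W, (Z_{i'})_{i'∈[G]})` where for
`i' ≤ i` the noise block `Z_{i'}` has its bottom `G - i` rows zero and for
`i' > i` the block `Z_{i'}` is entirely zero, then all (global) columns of `M`
with index in `[λ_i + 1 : λ_G]` — i.e. all entries of the blocks
`M_{i+1}, …, M_G` — are zero. -/
theorem scM_zero_tail {F : Type} [Field F]
    (N Rr Kc : ℕ) (hK : 0 < Kc) (hKR : Kc ≤ Rr) (hRN : Rr ≤ N)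
    (i : ℕ) (hi : i ∈ Finset.Icc 1 (scG N Rr)) (hilow : scG N Rr ≤ i + (Rr - Kc))
    (W : ℕ → F) (Z : ℕ → ℕ → ℕ → F)
    (hZ1 : ∀ i' ∈ Finset.Icc 1 i, ∀ r, (Rr - Kc) - (scG N Rr - i) ≤ r →
      ∀ c, Z i' r c = 0)
    (hZ2 : ∀ i', i < i' → ∀ r c, Z i' r c = 0) :
    ∀ j, i < j → j ≤ scG N Rr → ∀ r, r < N → ∀ c, c < scGamma N Rr Kc j →
      scM N Rr Kc W Z j r c = 0 := by
  rw [Finset.mem_Icc] at hi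
  unfold scG at hi hilow hZ1
  intro j hij hjG r _ c _
  rcases lt_or_ge r (scAlpha N Rr Kc j) with hr | hr
  · rw [scM_eq_scCat_of_lt_scAlpha N Rr Kc W Z (by omega) hr]
    refine scCat_eq_zero N Rr Kc W Z (fun j' h1 hj' k ↦ ?_) _
    have hrow : scAlpha N Rr Kc j' ≤ Rr + j - j' - 1 := by unfold scAlpha; omega
    refine scM_eq_zero_of_scAlpha_le N Rr Kc W Z h1 hrow ?_
    rcases le_or_gt j' i with hj'i | hj'i
    · exact hZ1 j' (Finset.mem_Icc.mpr ⟨h1, hj'i⟩) _ (by unfold scAlpha; omega) k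
    · exact hZ2 j' hj'i _ k
  · exact scM_eq_zero_of_scAlpha_le N Rr Kc W Z (by omega) hr (hZ2 j hij _ c)
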